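/- arXiv:2410.02708 — 2 statements merged into one kernel-verified Lean document; each statement's English description precedes it below -/
import Mathlib

section
/- Let c > 0 and M₀, κ, N₀, K₀, K₂ ∈ ℝ. Define E(A₁,A₂) = (M₀κ/(2c))(A₁² + 2A₂²) + (N₀/c)A₁A₂² + (K₀/(4c))A₁⁴ + (K₂/c)A₁²A₂² + ((K₀+K₂)/(2c))A₂⁴ and the vector field f(A₁,A₂) = (−(1/c)(M₀κA₁ + N₀A₂² + K₀A₁³ + 2K₂A₁A₂²), −(1/c)(M₀κA₂ + N₀A₁A₂ + (K₀+K₂)A₂³ + K₂A₂A₁²)). Then ∇E(A₁,A₂)·f(A₁,A₂) = −f₁(A₁,A₂)² − 2f₂(A₁,A₂)² for all (A₁,A₂) ∈ ℝ². -/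
/-!
The field `f` is not `-∇E` but a rescaling of it: `∂₁E = -f₁` and `∂₂E = -2 f₂`, that is,
`f = -diag(1, 1/2) ∇E`. Pairing `∇E` with `f` therefore gives minus the corresponding weighted
square norm of `f`.
-/

theorem hasDerivAt_quartic {𝕜 : Type*} [NontriviallyNormedField 𝕜] (a b d e x : 𝕜) :
    HasDerivAt (fun x => a * x ^ 4 + b * x ^ 2 + d * x + e) (4 * a * x ^ 3 + 2 * b * x + d) x := by
  have h := ((((hasDerivAt_pow 4 x).const_mul a).fun_add ((hasDerivAt_pow 2 x).const_mul b)).fun_add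
    (hasDerivAt_id' x |>.const_mul d)).add_const e
  refine h.congr_deriv ?_
  push_cast
  ring

noncomputable section

namespace HexagonalFront

variable (c M₀ κ N₀ K₀ K₂ : ℝ)

def energy (A₁ A₂ : ℝ) : ℝ :=
  (M₀*κ/(2*c))*(A₁^2 + 2*A₂^2) + (N₀/c)*(A₁*A₂^2) + (K₀/(4*c))*A₁^4
    + (K₂/c)*(A₁^2*A₂^2) + ((K₀+K₂)/(2*c))*A₂^4

def field₁ (A₁ A₂ : ℝ) : ℝ :=
  -(1/c)*(M₀*κ*A₁ + N₀*A₂^2 + K₀*A₁^3 + 2*K₂*A₁*A₂^2)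

def field₂ (A₁ A₂ : ℝ) : ℝ :=
  -(1/c)*(M₀*κ*A₂ + N₀*A₁*A₂ + (K₀+K₂)*A₂^3 + K₂*A₂*A₁^2)

theorem hasDerivAt_energy_fst (A₁ A₂ : ℝ) :
    HasDerivAt (fun x => energy c M₀ κ N₀ K₀ K₂ x A₂) (-field₁ c M₀ κ N₀ K₀ K₂ A₁ A₂) A₁ := by
  have h_quartic : (fun x => energy c M₀ κ N₀ K₀ K₂ x A₂) = fun x =>
      K₀/(4*c) * x^4 + (M₀*κ/(2*c) + K₂/c*A₂^2) * x^2 + N₀/c*A₂^2 * x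
        + (M₀*κ/c*A₂^2 + (K₀+K₂)/(2*c)*A₂^4) := by
    funext x
    unfold energy
    ring
  rw [h_quartic]
  refine (hasDerivAt_quartic _ _ _ _ A₁).congr_deriv ?_
  unfold field₁
  ring

theorem hasDerivAt_energy_snd (A₁ A₂ : ℝ) :
    HasDerivAt (fun y => energy c M₀ κ N₀ K₀ K₂ A₁ y) (-2 * field₂ c M₀ κ N₀ K₀ K₂ A₁ A₂) A₂ := by
  have h_quartic : (fun y => energy c M₀ κ N₀ K₀ K₂ A₁ y) = fun y =>
      (K₀+K₂)/(2*c) * y^4 + (M₀*κ/c + N₀/c*A₁ + K₂/c*A₁^2) * y^2 + 0 * y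
        + (M₀*κ/(2*c)*A₁^2 + K₀/(4*c)*A₁^4) := by
    funext y
    unfold energy
    ring
  rw [h_quartic]
  refine (hasDerivAt_quartic _ _ _ _ A₂).congr_deriv ?_
  unfold field₂
  ring

end HexagonalFront

end

theorem hexagonal_lyapunov_identity_general (c M₀ κ N₀ K₀ K₂ : ℝ) :
    let E : ℝ → ℝ → ℝ := fun A₁ A₂ =>
      (M₀*κ/(2*c))*(A₁^2 + 2*A₂^2) + (N₀/c)*(A₁*A₂^2) + (K₀/(4*c))*A₁^4
        + (K₂/c)*(A₁^2*A₂^2) + ((K₀+K₂)/(2*c))*A₂^4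
    let f₁ : ℝ → ℝ → ℝ := fun A₁ A₂ =>
      -(1/c)*(M₀*κ*A₁ + N₀*A₂^2 + K₀*A₁^3 + 2*K₂*A₁*A₂^2)
    let f₂ : ℝ → ℝ → ℝ := fun A₁ A₂ =>
      -(1/c)*(M₀*κ*A₂ + N₀*A₁*A₂ + (K₀+K₂)*A₂^3 + K₂*A₂*A₁^2)
    ∀ A₁ A₂ g₁ g₂ : ℝ,
      HasDerivAt (fun x => E x A₂) g₁ A₁ →
      HasDerivAt (fun y => E A₁ y) g₂ A₂ →
      g₁ * f₁ A₁ A₂ + g₂ * f₂ A₁ A₂ = -(f₁ A₁ A₂)^2 - 2*(f₂ A₁ A₂)^2 := by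
  intro E f₁ f₂ A₁ A₂ g₁ g₂ hg₁ hg₂
  obtain rfl : g₁ = -f₁ A₁ A₂ :=
    hg₁.unique (HexagonalFront.hasDerivAt_energy_fst c M₀ κ N₀ K₀ K₂ A₁ A₂)
  obtain rfl : g₂ = -2 * f₂ A₁ A₂ :=
    hg₂.unique (HexagonalFront.hasDerivAt_energy_snd c M₀ κ N₀ K₀ K₂ A₁ A₂)
  ring

/-- Lyapunov identity for the reduced travelling-front system on the hexagonal
lattice: `∇E · f = −f₁² − 2f₂²`. -/
theorem hexagonal_lyapunov_identity (c M₀ κ N₀ K₀ K₂ : ℝ) (hc : 0 < c) :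
    let E : ℝ → ℝ → ℝ := fun A₁ A₂ =>
      (M₀*κ/(2*c))*(A₁^2 + 2*A₂^2) + (N₀/c)*(A₁*A₂^2) + (K₀/(4*c))*A₁^4
        + (K₂/c)*(A₁^2*A₂^2) + ((K₀+K₂)/(2*c))*A₂^4
    let f₁ : ℝ → ℝ → ℝ := fun A₁ A₂ =>
      -(1/c)*(M₀*κ*A₁ + N₀*A₂^2 + K₀*A₁^3 + 2*K₂*A₁*A₂^2)
    let f₂ : ℝ → ℝ → ℝ := fun A₁ A₂ =>
      -(1/c)*(M₀*κ*A₂ + N₀*A₁*A₂ + (K₀+K₂)*A₂^3 + K₂*A₂*A₁^2)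
    ∀ A₁ A₂ g₁ g₂ : ℝ,
      HasDerivAt (fun x => E x A₂) g₁ A₁ →
      HasDerivAt (fun y => E A₁ y) g₂ A₂ →
      g₁ * f₁ A₁ A₂ + g₂ * f₂ A₁ A₂ = -(f₁ A₁ A₂)^2 - 2*(f₂ A₁ A₂)^2 :=
  hexagonal_lyapunov_identity_general c M₀ κ N₀ K₀ K₂
end

section
/- Let M₀, κ, N₀, K₀, K₂ ∈ ℝ with K₀ ≠ K₂, K₀ + K₂ ≠ 0 and (K₀N₀² + (K₀−K₂)²M₀κ)/(K₀+K₂) < 0. Set a = N₀/(K₀−K₂) and b = (1/(K₀−K₂))·√(−(K₀N₀² + (K₀−K₂)²M₀κ)/(K₀+K₂)). Then the point (a, b) is an equilibrium of the hexagonal reduced system, i.e. M₀κ·a + N₀b² + K₀a³ + 2K₂ab² = 0 and M₀κ·b + N₀ab + (K₀+K₂)b³ + K₂ba² = 0. -/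
/-! The second equation is `b` times `μ + N₀ a + (K₀+K₂) b² + K₂ a² = 0`, and the first
equation minus `a` times this reduced one factors as `(b² - a²) (N₀ - (K₀-K₂) a)`. So on the line
`(K₀-K₂) a = N₀` the point is an equilibrium as soon as the reduced second equation holds, and the
choice of `b²` is exactly what makes it hold. -/

theorem hexagonal_equilibrium_of_mixedMode {μ N₀ K₀ K₂ a b : ℝ} (ha : (K₀ - K₂) * a = N₀)
    (hb : μ + N₀ * a + (K₀ + K₂) * b ^ 2 + K₂ * a ^ 2 = 0) :
    μ * a + N₀ * b ^ 2 + K₀ * a ^ 3 + 2 * K₂ * a * b ^ 2 = 0 ∧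
      μ * b + N₀ * a * b + (K₀ + K₂) * b ^ 3 + K₂ * b * a ^ 2 = 0 :=
  ⟨by linear_combination a * hb - (b ^ 2 - a ^ 2) * ha, by linear_combination b * hb⟩

/-- The mixed-mode point `(a,b)` with `a = N₀/(K₀−K₂)` and
`b = (1/(K₀−K₂))√(−(K₀N₀² + (K₀−K₂)²M₀κ)/(K₀+K₂))` is an equilibrium of the
reduced hexagonal system. -/
theorem mixed_mode_equilibrium (M₀ κ N₀ K₀ K₂ : ℝ) (h1 : K₀ ≠ K₂) (h2 : K₀ + K₂ ≠ 0)
    (h3 : (K₀*N₀^2 + (K₀-K₂)^2*M₀*κ)/(K₀+K₂) < 0) :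
    let a := N₀/(K₀-K₂)
    let b := (1/(K₀-K₂)) * Real.sqrt (-((K₀*N₀^2 + (K₀-K₂)^2*M₀*κ)/(K₀+K₂)))
    M₀*κ*a + N₀*b^2 + K₀*a^3 + 2*K₂*a*b^2 = 0 ∧
    M₀*κ*b + N₀*a*b + (K₀+K₂)*b^3 + K₂*b*a^2 = 0 := by
  intro a b
  have hd : K₀ - K₂ ≠ 0 := sub_ne_zero.mpr h1
  have hb_sq : b ^ 2 = -((K₀*N₀^2 + (K₀-K₂)^2*M₀*κ)/(K₀+K₂)) / (K₀ - K₂) ^ 2 := by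
    rw [mul_pow, Real.sq_sqrt (by linarith), one_div, inv_pow, inv_mul_eq_div]
  apply hexagonal_equilibrium_of_mixedMode
  · exact mul_div_cancel₀ N₀ hd
  · rw [hb_sq]
    simp only [a]
    field_simp
    ring
end
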